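/- With the hypotheses of the previous setup (sin α = 2 t̄ M_W/M_H, cos α = √(1−sin²α), K as defined), the decay width Γ(H → hh)(M_H) = K² / (32 π M_H) · (1 − 4 M_h²/M_H²)^{1/2} satisfies Γ(H → hh)/M_H → g² t̄² / (32 π) as M_H → ∞. -/

import Mathlib

open Filter Real

/-! With `u = 1 / M_H` one has `sin α = 2 t̄ M_W u`, and after dividing `Γ(H → hh)` by `M_H` the
powers of `M_H` cancel: the ratio becomes a function of `u` that is continuous at `u = 0`, where
`sin α = 0`, `cos α = 1` and of `K / M_H` only the term `g · sin α · (M_H / 2) · cos α / M_W = g t̄`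
survives. -/

noncomputable def widthRatio (g tbar MW Mh t₁ MH : ℝ) : ℝ :=
  ((g * (2 * tbar * MW / MH) * √(1 - (2 * tbar * MW / MH)^2) * (Mh^2 + MH^2 / 2) *
      (√(1 - (2 * tbar * MW / MH)^2) / MW + 2 * √t₁ * (2 * tbar * MW / MH) / MH))^2 /
    (32 * π * MH) * √(1 - 4 * Mh^2 / MH^2)) / MH

/-- `widthRatio` in the variable `u = 1 / M_H`. -/
noncomputable def widthRatioInv (g tbar MW Mh t₁ u : ℝ) : ℝ :=
  (g * √(1 - (2 * tbar * MW * u)^2) * (tbar * MW * (1 + 2 * Mh^2 * u^2)) *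
      (√(1 - (2 * tbar * MW * u)^2) / MW + 4 * √t₁ * tbar * MW * u^2))^2 /
    (32 * π) * √(1 - 4 * Mh^2 * u^2)

theorem continuous_widthRatioInv (g tbar MW Mh t₁ : ℝ) :
    Continuous (widthRatioInv g tbar MW Mh t₁) := by
  unfold widthRatioInv
  fun_prop

theorem widthRatioInv_zero (g tbar Mh t₁ : ℝ) {MW : ℝ} (hMW : MW ≠ 0) :
    widthRatioInv g tbar MW Mh t₁ 0 = g^2 * tbar^2 / (32 * π) := by
  simp only [widthRatioInv, mul_zero, zero_pow two_ne_zero, sub_zero, add_zero, sqrt_one, mul_one]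
  field_simp

theorem widthRatioInv_inv (g tbar MW Mh t₁ : ℝ) {MH : ℝ} (hMH : MH ≠ 0) :
    widthRatioInv g tbar MW Mh t₁ MH⁻¹ = widthRatio g tbar MW Mh t₁ MH := by
  have hsin : 2 * tbar * MW * MH⁻¹ = 2 * tbar * MW / MH := (div_eq_mul_inv _ _).symm
  have hthreshold : 1 - 4 * Mh^2 * MH⁻¹^2 = 1 - 4 * Mh^2 / MH^2 := by field_simp
  rw [widthRatioInv, widthRatio, hsin, hthreshold]
  field_simp
  ring

theorem Hhh_width_ratio_limit_general (g tbar MW Mh t₁ : ℝ)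
    (hMW : 0 < MW) :
    Filter.Tendsto
      (fun MH : ℝ =>
        ((g * (2 * tbar * MW / MH) * Real.sqrt (1 - (2 * tbar * MW / MH)^2) *
            (Mh^2 + MH^2 / 2) *
            (Real.sqrt (1 - (2 * tbar * MW / MH)^2) / MW +
              2 * Real.sqrt t₁ * (2 * tbar * MW / MH) / MH))^2 /
          (32 * Real.pi * MH) * Real.sqrt (1 - 4 * Mh^2 / MH^2)) / MH)
      Filter.atTop (nhds (g^2 * tbar^2 / (32 * Real.pi))) := by
  have hlim : Tendsto (fun MH : ℝ => widthRatioInv g tbar MW Mh t₁ MH⁻¹) atTop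
      (nhds (widthRatioInv g tbar MW Mh t₁ 0)) :=
    (continuous_widthRatioInv g tbar MW Mh t₁).continuousAt.tendsto.comp tendsto_inv_atTop_zero
  rw [widthRatioInv_zero g tbar Mh t₁ hMW.ne'] at hlim
  refine hlim.congr' ?_
  filter_upwards [eventually_ne_atTop 0] with MH hMH
  exact widthRatioInv_inv g tbar MW Mh t₁ hMH

/-- The ratio `Γ(H→hh)/M_H` tends to `g² t̄² / (32π)` in the heavy-singlet limit. -/
theorem Hhh_width_ratio_limit (g tbar MW Mh t₁ : ℝ)
    (hg : 0 < g) (ht : 0 < tbar) (hMW : 0 < MW) (hMh : 0 < Mh) (ht₁ : 0 < t₁) :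
    Filter.Tendsto
      (fun MH : ℝ =>
        ((g * (2 * tbar * MW / MH) * Real.sqrt (1 - (2 * tbar * MW / MH)^2) *
            (Mh^2 + MH^2 / 2) *
            (Real.sqrt (1 - (2 * tbar * MW / MH)^2) / MW +
              2 * Real.sqrt t₁ * (2 * tbar * MW / MH) / MH))^2 /
          (32 * Real.pi * MH) * Real.sqrt (1 - 4 * Mh^2 / MH^2)) / MH)
      Filter.atTop (nhds (g^2 * tbar^2 / (32 * Real.pi))) :=
  Hhh_width_ratio_limit_general g tbar MW Mh t₁ hMW
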